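/- arXiv:math/9201253 — 3 statements merged into one kernel-verified Lean document; each statement's English description precedes it below -/
import Mathlib

section
/- Suppose λ is a regular uncountable cardinal with λ^{ℵ₀} > λ, let μ be the least cardinal with μ^{ℵ₀} > λ, and suppose λ = μ⁺. Then there exists an increasing sequence of cardinals ⟨μ_n : n < ω⟩ cofinal in μ such that μ = Σ_n μ_n^{ℵ₀}, i.e. λ = (Σ_n μ_n^{ℵ₀})⁺. -/
open Cardinal Order Ordinal

noncomputable instance stmt3_wo (o : Ordinal) : IsWellOrder o.ToType (· < ·) :=
  isWellOrder_lt

theorem stmt3 (l : Cardinal.{u}) (hreg : l.IsRegular) (hunc : Cardinal.aleph0 < l)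
    (hpow : l < l ^ Cardinal.aleph0)
    (μ : Cardinal.{u}) (hμ : μ = sInf {ν : Cardinal.{u} | l < ν ^ Cardinal.aleph0})
    (hsucc : l = Order.succ μ) :
    ∃ μs : ℕ → Cardinal.{u}, StrictMono μs ∧ (∀ n, μs n < μ) ∧ (⨆ n, μs n) = μ ∧
      μ = Cardinal.sum (fun n => μs n ^ Cardinal.aleph0) ∧
      l = Order.succ (Cardinal.sum (fun n => μs n ^ Cardinal.aleph0)) := by
  have hne : {ν : Cardinal.{u} | l < ν ^ Cardinal.aleph0}.Nonempty := ⟨l, hpow⟩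
  have hμmem : l < μ ^ ℵ₀ := by rw [hμ]; exact csInf_mem hne
  have hμle : μ ≤ l := hμ ▸ csInf_le (OrderBot.bddBelow _) hpow
  have haleμ : ℵ₀ ≤ μ := by
    have h := hunc; rw [hsucc] at h; exact Order.lt_succ_iff.mp h
  have h2 : ∀ ν < μ, ν ^ ℵ₀ ≤ l := by
    intro ν hν
    by_contra h
    push_neg at h
    exact absurd hν (not_lt.mpr (hμ ▸ csInf_le (OrderBot.bddBelow _) h))
  have h3 : ∀ ν < μ, ν ^ ℵ₀ < μ := by
    intro ν hν
    by_contra h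
    push_neg at h
    have hh : μ ^ ℵ₀ ≤ ν ^ ℵ₀ := by
      calc μ ^ ℵ₀ ≤ (ν ^ ℵ₀) ^ ℵ₀ := power_le_power_right h
        _ = ν ^ (ℵ₀ * ℵ₀) := (power_mul ..).symm
        _ = ν ^ ℵ₀ := by rw [aleph0_mul_aleph0]
    exact absurd (hμmem.trans_le (hh.trans (h2 ν hν))) (lt_irrefl l)
  have h2μ : (2 : Cardinal.{u}) < μ := by
    have := (nat_lt_aleph0 2).trans_le haleμ
    exact_mod_cast this
  have haleμ' : ℵ₀ < μ := (cantor ℵ₀).trans (h3 2 h2μ)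
  -- cofinality of μ is at most ℵ₀
  have hcof : (μ.ord).cof ≤ ℵ₀ := by
    by_contra hc
    push_neg at hc
    have key : μ ^ ℵ₀ ≤ μ := by
      have hmkα : #(μ.ord.ToType) = μ := by rw [mk_toType, card_ord]
      have hty : type ((· < ·) : μ.ord.ToType → μ.ord.ToType → Prop) = μ.ord := type_toType _
      have hbdd : ∀ f : ℕ → μ.ord.ToType, ∃ a : μ.ord.ToType, ∀ n, f n ≤ a := by
        intro f
        have hsup : (⨆ n, typein ((· < ·) : μ.ord.ToType → μ.ord.ToType → Prop) (f n)) < μ.ord := by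
          apply Ordinal.iSup_lt_ord_lift
          · simpa using hc
          · intro n; exact typein_lt_self _
        obtain ⟨a, ha⟩ := typein_surj ((· < ·) : μ.ord.ToType → μ.ord.ToType → Prop)
          (by rw [hty]; exact hsup)
        refine ⟨a, fun n => ?_⟩
        have h' : typein ((· < ·) : μ.ord.ToType → μ.ord.ToType → Prop) (f n) ≤
            typein ((· < ·) : μ.ord.ToType → μ.ord.ToType → Prop) a := by
          rw [ha]; exact le_ciSup (Ordinal.bddAbove_range _) n
        exact (typein_le_typein' μ.ord).mp h'
      have hsub : (Set.univ : Set (ℕ → μ.ord.ToType)) ⊆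
          ⋃ a : μ.ord.ToType, {f : ℕ → μ.ord.ToType | ∀ n, f n ≤ a} := by
        intro f _
        obtain ⟨a, ha⟩ := hbdd f
        exact Set.mem_iUnion.mpr ⟨a, ha⟩
      calc μ ^ ℵ₀ = #(ℕ → μ.ord.ToType) := by
            rw [← hmkα, mk_arrow]; simp
        _ = #(Set.univ : Set (ℕ → μ.ord.ToType)) := mk_univ.symm
        _ ≤ #(⋃ a : μ.ord.ToType, {f : ℕ → μ.ord.ToType | ∀ n, f n ≤ a}) := mk_le_mk_of_subset hsub
        _ ≤ Cardinal.sum (fun a : μ.ord.ToType => #{f : ℕ → μ.ord.ToType | ∀ n, f n ≤ a}) :=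
            mk_iUnion_le_sum_mk
        _ ≤ Cardinal.sum (fun _ : μ.ord.ToType => μ) := by
            apply Cardinal.sum_le_sum
            intro a
            have hinj2 : #{f : ℕ → μ.ord.ToType | ∀ n, f n ≤ a} ≤ #(ℕ → Set.Iic a) := by
              apply mk_le_of_injective
                (f := fun g : {f : ℕ → μ.ord.ToType | ∀ n, f n ≤ a} =>
                  (fun n => ⟨g.1 n, g.2 n⟩ : ℕ → Set.Iic a))
              intro g1 g2 h
              exact Subtype.ext (funext fun n => congrArg Subtype.val (congrFun h n))
            have heq : #(ℕ → Set.Iic a) = #(Set.Iic a) ^ ℵ₀ := by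
              rw [mk_arrow]; simp
            have hIic : #(Set.Iic a) < μ := by
              have h1 : #(Set.Iio a) < μ := mk_Iio_ord_toType a
              have h4 : #(Set.Iic a) ≤ #(Set.Iio a) + 1 := by
                rw [← Set.Iio_insert]; exact mk_insert_le
              exact h4.trans_lt (add_lt_of_lt haleμ h1 (one_lt_aleph0.trans haleμ'))
            exact (hinj2.trans_eq heq).trans (h3 _ hIic).le
        _ = μ := by rw [sum_const', hmkα, mul_eq_self haleμ]
    exact absurd ((key.trans hμle).trans_lt hμmem) (lt_irrefl _)
  -- μ is a limit cardinal
  have hlimit : ∀ ν < μ, Order.succ ν < μ := by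
    intro ν hν
    have hν'lt : max ν ℵ₀ < μ := max_lt hν haleμ'
    have hreg' : (Order.succ (max ν ℵ₀)).IsRegular := isRegular_succ (le_max_right _ _)
    have hne' : Order.succ (max ν ℵ₀) ≠ μ := by
      intro h
      have h5 := hcof
      rw [← h, hreg'.cof_eq] at h5
      exact absurd (Order.lt_succ_of_le (le_max_right ν ℵ₀)) (not_lt.mpr h5)
    have h6 : Order.succ (max ν ℵ₀) < μ :=
      lt_of_le_of_ne (Order.succ_le_of_lt hν'lt) hne'
    exact lt_of_le_of_lt (Order.succ_le_succ (le_max_left _ _)) h6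
  -- get a cofinal sequence
  obtain ⟨ι, f, hlsub, hcard⟩ := Ordinal.exists_lsub_cof μ.ord
  have hord0 : μ.ord ≠ 0 := by
    intro h
    have h9 := congrArg Ordinal.card h
    rw [card_ord, Ordinal.card_zero] at h9
    rw [h9] at haleμ
    exact absurd haleμ (not_le.mpr aleph0_pos)
  have hι0 : #ι ≠ 0 := by rw [hcard, Ordinal.cof_ne_zero]; exact hord0
  have hιne : Nonempty ι := Cardinal.mk_ne_zero_iff.mp hι0
  have hcnt : Countable ι := mk_le_aleph0_iff.mp (hcard ▸ hcof)
  obtain ⟨s, hs⟩ := exists_surjective_nat ι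
  set b : ℕ → Cardinal.{u} := fun n => (f (s n)).card with hb
  have hbμ : ∀ n, b n < μ := fun n =>
    Cardinal.lt_ord.mp (hlsub ▸ Ordinal.lt_lsub f (s n))
  set μs : ℕ → Cardinal.{u} := fun n =>
    Nat.rec ℵ₀ (fun k ih => max (Order.succ ih) (Order.succ (b k))) n with hμs
  have hmono : StrictMono μs := strictMono_nat_of_lt_succ fun n =>
    (Order.lt_succ _).trans_le (le_max_left _ _)
  have hlt : ∀ n, μs n < μ := by
    intro n; induction n with
    | zero => exact haleμ'
    | succ k ih => exact max_lt (hlimit _ ih) (hlimit _ (hbμ k))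
  have hbub : BddAbove (Set.range μs) := Cardinal.bddAbove_range _
  have hsup : (⨆ n, μs n) = μ := by
    refine le_antisymm (ciSup_le' fun n => (hlt n).le) (le_of_forall_lt ?_)
    intro c hc
    have h7 : c.ord < lsub f := by rw [hlsub]; exact Cardinal.ord_lt_ord.mpr hc
    obtain ⟨i, hi⟩ := Ordinal.lt_lsub_iff.mp h7
    obtain ⟨n, rfl⟩ := hs i
    have h8 : c ≤ b n := by
      have h10 := Ordinal.card_le_card hi
      rwa [card_ord] at h10
    calc c ≤ b n := h8
      _ < Order.succ (b n) := Order.lt_succ _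
      _ ≤ μs (n + 1) := le_max_right _ _
      _ ≤ ⨆ n, μs n := le_ciSup hbub (n + 1)
  have hsum : Cardinal.sum (fun n => μs n ^ ℵ₀) = μ := by
    refine le_antisymm ?_ ?_
    · calc Cardinal.sum (fun n => μs n ^ ℵ₀) ≤ Cardinal.sum (fun _ : ℕ => μ) :=
          Cardinal.sum_le_sum _ _ fun n => (h3 _ (hlt n)).le
        _ = ℵ₀ * μ := by rw [sum_const]; simp
        _ = μ := by rw [mul_eq_max le_rfl haleμ, max_eq_right haleμ]
    · rw [← hsup]
      exact ciSup_le' fun n =>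
        (self_le_power _ one_le_aleph0).trans (Cardinal.le_sum _ n)
  exact ⟨μs, hmono, hlt, hsup, hsum.symm, by rw [hsucc, hsum]⟩
end

section
/- If λ is a regular cardinal with λ > ℵ₁, then there exist a stationary set S ⊆ λ and a sequence ⟨c_δ : δ ∈ S⟩ such that each c_δ is a closed unbounded subset of δ of order type ω, and for every club E ⊆ λ the set { δ ∈ S : c_δ ⊆ E } is stationary in λ. -/
universe u

/-- `C` is a closed unbounded subset of the ordinal `δ`. -/
def IsClubIn (C : Set Ordinal.{u}) (δ : Ordinal.{u}) : Prop :=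
  C ⊆ Set.Iio δ ∧ (∀ α < δ, ∃ β ∈ C, α ≤ β) ∧
    ∀ s ⊆ C, s.Nonempty → sSup s < δ → sSup s ∈ C

/-- `S` is stationary in the ordinal `l`: it meets every club of `l`. -/
def IsStationaryIn (S : Set Ordinal.{u}) (l : Ordinal.{u}) : Prop :=
  ∀ E, IsClubIn E l → (S ∩ E).Nonempty

namespace Stmt12Aux

/-- A strictly increasing cofinal `ℕ`-sequence through `A` below `δ`. -/
def OkSeq (A : Set Ordinal.{u}) (δ : Ordinal.{u}) (g : ℕ → Ordinal.{u}) : Prop :=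
  StrictMono g ∧ (∀ n, g n ∈ A ∧ g n < δ) ∧ ∀ β < δ, ∃ n, β ≤ g n

open Classical in
noncomputable def seqOf (A : Set Ordinal.{u}) (δ : Ordinal.{u}) : ℕ → Ordinal.{u} :=
  if h : ∃ g, OkSeq A δ g then h.choose else fun _ => 0

theorem seqOf_spec {A : Set Ordinal.{u}} {δ : Ordinal.{u}} (h : ∃ g, OkSeq A δ g) :
    OkSeq A δ (seqOf A δ) := by
  rw [seqOf, dif_pos h]; exact h.choose_spec

theorem exists_base {δ : Ordinal.{u}} (hδ : δ.cof = Cardinal.aleph0) :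
    ∃ b : ℕ → Ordinal.{u}, StrictMono b ∧ (∀ n, b n < δ) ∧ ∀ β < δ, ∃ n, β ≤ b n := by
  obtain ⟨f, hf⟩ := Ordinal.exists_fundamental_sequence δ
  have hord : δ.cof.ord = Ordinal.omega0 := by rw [hδ, Cardinal.ord_aleph0]
  have hn : ∀ n : ℕ, (n : Ordinal.{u}) < δ.cof.ord := fun n => by
    rw [hord]; exact Ordinal.nat_lt_omega0 n
  refine ⟨fun n => f n (hn n), ?_, ?_, ?_⟩
  · intro m n hmn
    exact hf.strict_mono _ _ (by exact_mod_cast hmn)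
  · intro n; rw [← hf.blsub_eq]; exact Ordinal.lt_blsub _ _ _
  · intro β hβ
    rw [← hf.blsub_eq, Ordinal.lt_blsub_iff] at hβ
    obtain ⟨i, hi, hle⟩ := hβ
    obtain ⟨n, rfl⟩ := Ordinal.lt_omega0.1 (by rw [← hord]; exact hi)
    exact ⟨n, hle⟩

theorem exists_okSeq {A : Set Ordinal.{u}} {δ : Ordinal.{u}} (hδ : δ.cof = Cardinal.aleph0)
    (hA : A ⊆ Set.Iio δ) (hub : ∀ β < δ, ∃ a ∈ A, β ≤ a) : ∃ g, OkSeq A δ g := by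
  have hlim : Order.IsSuccLimit δ := Ordinal.aleph0_le_cof.1 (le_of_eq hδ.symm)
  obtain ⟨b, hbmono, hblt, hbcof⟩ := exists_base hδ
  have hu' : ∀ β : Ordinal.{u}, ∃ a, β < δ → a ∈ A ∧ β ≤ a := by
    intro β
    by_cases h : β < δ
    · obtain ⟨a, ha, hba⟩ := hub β h; exact ⟨a, fun _ => ⟨ha, hba⟩⟩
    · exact ⟨0, fun hc => absurd hc h⟩
  choose uf hu using hu'
  set g : ℕ → Ordinal.{u} :=
    fun n => Nat.rec (uf (b 0)) (fun n ih => uf (max (b (n + 1)) (ih + 1))) n with hg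
  have key : ∀ n, g n ∈ A ∧ b n ≤ g n := by
    intro n
    induction n with
    | zero => exact hu (b 0) (hblt 0)
    | succ n ih =>
      have harg : max (b (n + 1)) (g n + 1) < δ := by
        apply max_lt (hblt (n + 1))
        rw [Ordinal.add_one_eq_succ]
        exact hlim.succ_lt (hA ih.1)
      obtain ⟨h1, h2⟩ := hu _ harg
      exact ⟨h1, le_trans (le_max_left _ _) h2⟩
  have hlt : ∀ n, g n < δ := fun n => hA (key n).1
  have hmono : StrictMono g := by
    apply strictMono_nat_of_lt_succ
    intro n
    have harg : max (b (n + 1)) (g n + 1) < δ := by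
      apply max_lt (hblt (n + 1))
      rw [Ordinal.add_one_eq_succ]
      exact hlim.succ_lt (hlt n)
    have h2 : g n + 1 ≤ g (n + 1) := le_trans (le_max_right _ _) (hu _ harg).2
    have h3 : g n < g n + 1 := by
      rw [Ordinal.add_one_eq_succ]; exact Order.lt_succ _
    exact lt_of_lt_of_le h3 h2
  exact ⟨g, hmono, fun n => ⟨(key n).1, hlt n⟩,
    fun β hβ => (hbcof β hβ).imp fun n h => h.trans (key n).2⟩

theorem okSeq_club {A : Set Ordinal.{u}} {δ : Ordinal.{u}} {g : ℕ → Ordinal.{u}}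
    (h : OkSeq A δ g) : IsClubIn (Set.range g) δ ∧
      Ordinal.type (Subrel ((· < ·) : Ordinal.{u} → Ordinal.{u} → Prop) (· ∈ Set.range g)) =
        Ordinal.omega0 := by
  obtain ⟨hmono, hmem, hcof⟩ := h
  have hsub : Set.range g ⊆ Set.Iio δ := by rintro _ ⟨n, rfl⟩; exact (hmem n).2
  constructor
  · refine ⟨hsub, ?_, ?_⟩
    · intro α hα; obtain ⟨n, hn⟩ := hcof α hα; exact ⟨g n, Set.mem_range_self n, hn⟩
    · intro s hs hne hlt
      obtain ⟨N, hN⟩ := hcof (sSup s) hlt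
      have hfin : s.Finite := by
        apply Set.Finite.subset ((Set.finite_Iic N).image g)
        intro y hy
        obtain ⟨k, hk⟩ := hs hy
        have hyb : y ≤ sSup s := le_csSup ⟨δ, fun x hx => (hsub (hs hx)).le⟩ hy
        exact ⟨k, hmono.le_iff_le.1 (by rw [hk]; exact hyb.trans hN), hk⟩
      exact hs (hne.csSup_mem hfin)
  · have iso : ((· < ·) : ℕ → ℕ → Prop) ≃r
        Subrel ((· < ·) : Ordinal.{u} → Ordinal.{u} → Prop) (· ∈ Set.range g) := by
      refine ⟨Equiv.ofInjective g hmono.injective, ?_⟩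
      intro m n
      simp only [Subrel, Order.Preimage, Equiv.ofInjective_apply]
      exact hmono.lt_iff_lt
    have h2 := iso.ordinal_lift_type_eq
    rw [Ordinal.type_nat_lt, Ordinal.lift_omega0, Ordinal.lift_uzero] at h2
    exact h2.symm

end Stmt12Aux

namespace Stmt12Aux

theorem sSup_mono' {s t : Set Ordinal.{u}} (hst : s ⊆ t) (a : Ordinal.{u})
    (ht : t ⊆ Set.Iio a) : sSup s ≤ sSup t := by
  rcases s.eq_empty_or_nonempty with rfl | hne
  · rw [csSup_empty]; exact bot_le
  · exact csSup_le_csSup ⟨a, fun x hx => (ht hx).le⟩ hne hst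

theorem isClubIn_inter_Iio {L : Ordinal.{u}} (hL : Order.IsSuccLimit L)
    (hcof : Cardinal.aleph0 < L.cof) (i₀ : Ordinal.{u}) (hi₀ : i₀.card < L.cof)
    (E : Ordinal.{u} → Set Ordinal.{u}) (hE : ∀ j < i₀, IsClubIn (E j) L) :
    IsClubIn (Set.Iio L ∩ {β | ∀ j < i₀, β ∈ E j}) L := by
  refine ⟨Set.inter_subset_left, ?_, ?_⟩
  · -- unbounded
    intro α hα
    have hv' : ∀ j β : Ordinal.{u}, ∃ e, j < i₀ → β < L → e ∈ E j ∧ β ≤ e ∧ e < L := by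
      intro j β
      by_cases hj : j < i₀
      · by_cases hβ : β < L
        · obtain ⟨e, he, hbe⟩ := (hE j hj).2.1 β hβ
          exact ⟨e, fun _ _ => ⟨he, hbe, (hE j hj).1 he⟩⟩
        · exact ⟨0, fun _ h => absurd h hβ⟩
      · exact ⟨0, fun h => absurd h hj⟩
    choose v hv using hv'
    set step : Ordinal.{u} → Ordinal.{u} := fun β =>
      max (β + 1) (⨆ x : i₀.ToType, v ((Ordinal.ToType.mk (o := i₀)).symm x).1 β) with hstep
    have hstep_lt : ∀ β < L, step β < L := by
      intro β hβ
      apply max_lt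
      · rw [Ordinal.add_one_eq_succ]; exact hL.succ_lt hβ
      · apply Ordinal.iSup_lt_ord (by rwa [Cardinal.mk_toType])
        intro x
        obtain ⟨j, hj⟩ := ((Ordinal.ToType.mk (o := i₀)).symm x)
        by_cases hβ' : β < L
        · exact (hv j β hj hβ').2.2
        · exact absurd hβ hβ'
    have hself : ∀ β : Ordinal.{u}, β < step β := fun β =>
      lt_of_lt_of_le (by rw [Ordinal.add_one_eq_succ]; exact Order.lt_succ β) (le_max_left _ _)
    have hvle : ∀ β < L, ∀ j (hj : j < i₀), v j β ≤ step β := by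
      intro β hβ j hj
      have h1 : v j β ≤ ⨆ x : i₀.ToType, v ((Ordinal.ToType.mk (o := i₀)).symm x).1 β := by
        have := Ordinal.le_iSup (fun x : i₀.ToType =>
          v ((Ordinal.ToType.mk (o := i₀)).symm x).1 β) (Ordinal.ToType.mk (o := i₀) ⟨j, hj⟩)
        rwa [OrderIso.symm_apply_apply] at this
      exact h1.trans (le_max_right _ _)
    set x : ℕ → Ordinal.{u} := fun n => Nat.rec α (fun _ ih => step ih) n with hx
    have hxL : ∀ n, x n < L := by
      intro n
      induction n with
      | zero => exact hα
      | succ n ih => exact hstep_lt _ ih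
    have hxlt : ∀ n, x n < x (n + 1) := fun n => hself (x n)
    set ξ := ⨆ n, x n with hξ
    have hξL : ξ < L := by
      apply Ordinal.iSup_lt_ord_lift ?_ hxL
      rw [Cardinal.mk_nat, Cardinal.lift_aleph0]; exact hcof
    have hxle : ∀ n, x n ≤ ξ := fun n => Ordinal.le_iSup x n
    refine ⟨ξ, ⟨hξL, ?_⟩, hxle 0⟩
    intro j hj
    set sj := Set.range fun n => v j (x n) with hsj
    have hsjE : sj ⊆ E j := by rintro _ ⟨n, rfl⟩; exact (hv j (x n) hj (hxL n)).1
    have hbdd : BddAbove sj := by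
      refine ⟨ξ, ?_⟩
      rintro _ ⟨n, rfl⟩
      exact le_trans (hvle (x n) (hxL n) j hj) (hxle (n + 1))
    have hsup : sSup sj = ξ := by
      apply le_antisymm
      · apply csSup_le (Set.range_nonempty _)
        rintro _ ⟨n, rfl⟩
        exact le_trans (hvle (x n) (hxL n) j hj) (hxle (n + 1))
      · rw [hξ]
        apply Ordinal.iSup_le
        intro n
        exact le_trans (hv j (x n) hj (hxL n)).2.1 (le_csSup hbdd ⟨n, rfl⟩)
    have := (hE j hj).2.2 sj hsjE (Set.range_nonempty _) (by rw [hsup]; exact hξL)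
    rwa [hsup] at this
  · -- closed
    intro s hs hne hlt
    exact ⟨hlt, fun j hj =>
      (hE j hj).2.2 s (fun y hy => (hs hy).2 j hj) hne hlt⟩

theorem isClubIn_inter2 {L : Ordinal.{u}} (hL : Order.IsSuccLimit L)
    (hcof : Cardinal.aleph0 < L.cof) {A B : Set Ordinal.{u}}
    (hA : IsClubIn A L) (hB : IsClubIn B L) : IsClubIn (A ∩ B) L := by
  have h2 : ((2 : Ordinal.{u})).card < L.cof := by
    rw [Ordinal.card_ofNat]
    exact lt_trans (Cardinal.nat_lt_aleph0 2) hcof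
  have := isClubIn_inter_Iio hL hcof 2 h2 (fun j => if j = 0 then A else B) ?_
  · have heq : Set.Iio L ∩ {β | ∀ j < (2 : Ordinal.{u}), β ∈ (if j = 0 then A else B)} = A ∩ B := by
      ext β
      constructor
      · rintro ⟨-, hβ⟩
        constructor
        · have := hβ 0 (by exact lt_of_lt_of_le zero_lt_one one_le_two)
          simpa using this
        · have := hβ 1 one_lt_two
          simpa using this
      · rintro ⟨hβA, hβB⟩
        refine ⟨hA.1 hβA, fun j hj => ?_⟩
        by_cases hj0 : j = 0
        · simp [hj0, hβA]
        · simp [hj0, hβB]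
    rwa [heq] at this
  · intro j hj
    by_cases hj0 : j = 0
    · simpa [hj0] using hA
    · simpa [hj0] using hB

theorem exists_pick {L : Ordinal.{u}} (hL : Order.IsSuccLimit L) (hcof : Cardinal.aleph0 < L.cof)
    {D : Set Ordinal.{u}} (hD : IsClubIn D L) :
    ∃ δ, δ ∈ D ∧ δ < L ∧ δ.cof = Cardinal.aleph0 ∧ ∀ β < δ, ∃ e ∈ D, β ≤ e ∧ e < δ := by
  have hw' : ∀ β : Ordinal.{u}, ∃ e, β < L → e ∈ D ∧ β < e ∧ e < L := by
    intro β
    by_cases hβ : β < L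
    · have hβ1 : β + 1 < L := by rw [Ordinal.add_one_eq_succ]; exact hL.succ_lt hβ
      obtain ⟨e, he, hbe⟩ := hD.2.1 (β + 1) hβ1
      refine ⟨e, fun _ => ⟨he, ?_, hD.1 he⟩⟩
      exact lt_of_lt_of_le (by rw [Ordinal.add_one_eq_succ]; exact Order.lt_succ β) hbe
    · exact ⟨0, fun h => absurd h hβ⟩
  choose w hw using hw'
  set x : ℕ → Ordinal.{u} := fun n => Nat.rec (w 0) (fun _ ih => w ih) n with hx
  have h0L : (0 : Ordinal.{u}) < L := hL.pos
  have hxD : ∀ n, x n ∈ D ∧ x n < L := by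
    intro n
    induction n with
    | zero => exact ⟨(hw 0 h0L).1, (hw 0 h0L).2.2⟩
    | succ n ih => exact ⟨(hw (x n) ih.2).1, (hw (x n) ih.2).2.2⟩
  have hxlt : ∀ n, x n < x (n + 1) := fun n => (hw (x n) (hxD n).2).2.1
  set δ := ⨆ n, x n with hδ
  have hδL : δ < L := by
    apply Ordinal.iSup_lt_ord_lift ?_ (fun n => (hxD n).2)
    rw [Cardinal.mk_nat, Cardinal.lift_aleph0]; exact hcof
  have hxle : ∀ n, x n ≤ δ := fun n => Ordinal.le_iSup x n
  have hδD : δ ∈ D := by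
    have hsup : sSup (Set.range x) = δ := rfl
    have := hD.2.2 (Set.range x) (by rintro _ ⟨n, rfl⟩; exact (hxD n).1)
      (Set.range_nonempty _) (by rw [hsup]; exact hδL)
    rwa [hsup] at this
  have hub : ∀ β < δ, ∃ e ∈ D, β ≤ e ∧ e < δ := by
    intro β hβ
    obtain ⟨n, hn⟩ := Ordinal.lt_iSup_iff.1 hβ
    exact ⟨x n, (hxD n).1, hn.le, lt_of_lt_of_le (hxlt n) (hxle (n + 1))⟩
  have hδlim : Order.IsSuccLimit δ := by
    rw [Ordinal.isSuccLimit_iff, Order.isSuccPrelimit_iff_succ_lt]; refine ⟨?_, ?_⟩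
    · intro h0
      have := lt_of_lt_of_le (hxlt 0) (hxle 1)
      rw [h0] at this
      exact absurd this (not_lt_zero' (a := x 0))
    · intro a ha
      obtain ⟨n, hn⟩ := Ordinal.lt_iSup_iff.1 ha
      have : Order.succ a ≤ x n := Order.succ_le_of_lt hn
      exact lt_of_le_of_lt this (lt_of_lt_of_le (hxlt n) (hxle (n + 1)))
  have hcofδ : δ.cof = Cardinal.aleph0 := by
    apply le_antisymm
    · have hH : ∀ n, x n < ⨆ m, x m := fun n => lt_of_lt_of_le (hxlt n) (hxle (n + 1))
      have := Ordinal.cof_iSup_le_lift hH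
      rwa [Cardinal.mk_nat, Cardinal.lift_aleph0, ← hδ] at this
    · exact Ordinal.aleph0_le_cof.2 hδlim
  exact ⟨δ, hδD, hδL, hcofδ, hub⟩

end Stmt12Aux

namespace Stmt12Aux

noncomputable def fseq (δ : Ordinal.{u}) : ℕ → Ordinal.{u} := seqOf (Set.Iio δ) δ

noncomputable def glueSet (D : Set Ordinal.{u}) (δ : Ordinal.{u}) : Set Ordinal.{u} :=
  (fun α => sSup (D ∩ Set.Iio α)) ''
    {α | α ∈ Set.range (fseq δ) ∧ (D ∩ Set.Iio α).Nonempty}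

def Good (A : Set Ordinal.{u}) (δ : Ordinal.{u}) : Prop :=
  A ⊆ Set.Iio δ ∧ ∀ β < δ, ∃ a ∈ A, β ≤ a

open Classical in
noncomputable def goodSet (D : Set Ordinal.{u}) (δ : Ordinal.{u}) : Set Ordinal.{u} :=
  if Good (glueSet D δ) δ then glueSet D δ else Set.Iio δ

noncomputable def cand (D : Set Ordinal.{u}) : Ordinal.{u} → Set Ordinal.{u} :=
  fun δ => Set.range (seqOf (goodSet D δ) δ)

theorem good_goodSet (D : Set Ordinal.{u}) (δ : Ordinal.{u}) : Good (goodSet D δ) δ := by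
  rw [goodSet]
  split_ifs with h
  · exact h
  · exact ⟨subset_rfl, fun β hβ => ⟨β, hβ, le_rfl⟩⟩

theorem cand_okSeq {D : Set Ordinal.{u}} {δ : Ordinal.{u}} (hδ : δ.cof = Cardinal.aleph0) :
    OkSeq (goodSet D δ) δ (seqOf (goodSet D δ) δ) := by
  obtain ⟨h1, h2⟩ := good_goodSet D δ
  exact seqOf_spec (exists_okSeq hδ h1 h2)

theorem cand_spec {D : Set Ordinal.{u}} {δ : Ordinal.{u}} (hδ : δ.cof = Cardinal.aleph0) :
    IsClubIn (cand D δ) δ ∧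
      Ordinal.type (Subrel ((· < ·) : Ordinal.{u} → Ordinal.{u} → Prop) (· ∈ cand D δ)) =
        Ordinal.omega0 :=
  okSeq_club (cand_okSeq hδ)

theorem cand_subset {D : Set Ordinal.{u}} {δ : Ordinal.{u}} (hδ : δ.cof = Cardinal.aleph0) :
    cand D δ ⊆ goodSet D δ := by
  rintro _ ⟨n, rfl⟩
  exact ((cand_okSeq hδ).2.1 n).1

theorem fseq_spec {δ : Ordinal.{u}} (hδ : δ.cof = Cardinal.aleph0) :
    OkSeq (Set.Iio δ) δ (fseq δ) :=
  seqOf_spec (exists_okSeq hδ subset_rfl (fun β hβ => ⟨β, hβ, le_rfl⟩))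

theorem glueSet_spec {L : Ordinal.{u}} {D : Set Ordinal.{u}} (hD : IsClubIn D L)
    {δ : Ordinal.{u}} (hδL : δ < L) (hδ : δ.cof = Cardinal.aleph0)
    (hacc : ∀ β < δ, ∃ e ∈ D, β ≤ e ∧ e < δ) :
    Good (glueSet D δ) δ ∧ glueSet D δ ⊆ D := by
  have hlim : Order.IsSuccLimit δ := Ordinal.aleph0_le_cof.1 (le_of_eq hδ.symm)
  have hfs := fseq_spec hδ
  have hsuple : ∀ (α : Ordinal.{u}), (D ∩ Set.Iio α).Nonempty →
      sSup (D ∩ Set.Iio α) ≤ α := fun α hne =>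
    csSup_le hne (fun x hx => hx.2.le)
  refine ⟨⟨?_, ?_⟩, ?_⟩
  · rintro _ ⟨α, ⟨⟨n, rfl⟩, hne⟩, rfl⟩
    exact lt_of_le_of_lt (hsuple _ hne) (hfs.2.1 n).2
  · intro β hβ
    obtain ⟨e, heD, hbe, heδ⟩ := hacc β hβ
    have heδ1 : e + 1 < δ := by rw [Ordinal.add_one_eq_succ]; exact hlim.succ_lt heδ
    obtain ⟨n, hn⟩ := hfs.2.2 (e + 1) heδ1
    have helt : e < fseq δ n :=
      lt_of_lt_of_le (by rw [Ordinal.add_one_eq_succ]; exact Order.lt_succ e) hn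
    have hne : (D ∩ Set.Iio (fseq δ n)).Nonempty := ⟨e, heD, helt⟩
    refine ⟨sSup (D ∩ Set.Iio (fseq δ n)), ⟨fseq δ n, ⟨⟨n, rfl⟩, hne⟩, rfl⟩, ?_⟩
    exact le_trans hbe (le_csSup ⟨fseq δ n, fun x hx => hx.2.le⟩ ⟨heD, helt⟩)
  · rintro _ ⟨α, ⟨⟨n, rfl⟩, hne⟩, rfl⟩
    have hlt : sSup (D ∩ Set.Iio (fseq δ n)) < L :=
      lt_trans (lt_of_le_of_lt (hsuple _ hne) (hfs.2.1 n).2) hδL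
    exact hD.2.2 _ Set.inter_subset_left hne hlt

theorem stab_fun {θ : Ordinal.{u}} (hθ : 0 < θ) (f : Ordinal.{u} → Ordinal.{u})
    (hf : ∀ i j, i ≤ j → f j ≤ f i) : ∃ i < θ, ∀ j, i ≤ j → j < θ → f j = f i := by
  obtain ⟨m, hm, hmin⟩ := Ordinal.lt_wf.has_min (f '' Set.Iio θ) ⟨f 0, 0, hθ, rfl⟩
  obtain ⟨i, hiθ, rfl⟩ := hm
  exact ⟨i, hiθ, fun j hij hjθ =>
    le_antisymm (hf i j hij) (not_lt.1 (hmin (f j) ⟨j, hjθ, rfl⟩))⟩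

theorem stab_prop {θ : Ordinal.{u}} (hθ : 0 < θ) (p : Ordinal.{u} → Prop)
    (hp : ∀ i j, i ≤ j → p j → p i) : ∃ i < θ, ∀ j, i ≤ j → j < θ → (p j ↔ p i) := by
  by_cases h : ∃ i, i < θ ∧ ¬p i
  · obtain ⟨i, hiθ, hi⟩ := h
    exact ⟨i, hiθ, fun j hij _ => iff_of_false (fun hj => hi (hp i j hij hj)) hi⟩
  · push_neg at h
    exact ⟨0, hθ, fun j _ hjθ => iff_of_true (h j hjθ) (h 0 hθ)⟩

noncomputable def Dof (L : Ordinal.{u})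
    (bad : (Ordinal.{u} → Set Ordinal.{u}) → Set Ordinal.{u}) :
    Ordinal.{u} → Set Ordinal.{u} :=
  Ordinal.lt_wf.fix fun i IH =>
    Set.Iio L ∩ {β | ∀ j, ∀ hj : j < i, β ∈ IH j hj ∩ bad (cand (IH j hj))}

theorem Dof_eq (L : Ordinal.{u}) (bad : (Ordinal.{u} → Set Ordinal.{u}) → Set Ordinal.{u})
    (i : Ordinal.{u}) :
    Dof L bad i =
      Set.Iio L ∩ {β | ∀ j, j < i → β ∈ Dof L bad j ∩ bad (cand (Dof L bad j))} := by
  rw [Dof]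
  exact Ordinal.lt_wf.fix_eq _ i

theorem Dof_mono (L : Ordinal.{u}) (bad : (Ordinal.{u} → Set Ordinal.{u}) → Set Ordinal.{u})
    {i j : Ordinal.{u}} (h : j ≤ i) : Dof L bad i ⊆ Dof L bad j := by
  intro β hβ
  rw [Dof_eq] at hβ ⊢
  exact ⟨hβ.1, fun k hk => hβ.2 k (lt_of_lt_of_le hk h)⟩

end Stmt12Aux

namespace Stmt12Aux

theorem main (l : Cardinal.{u}) (hreg : l.IsRegular) (hl : Cardinal.aleph 1 < l)
    (bad : (Ordinal.{u} → Set Ordinal.{u}) → Set Ordinal.{u})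
    (hbad : ∀ D : Set Ordinal.{u}, IsClubIn (bad (cand D)) l.ord ∧
      ∀ δ, δ < l.ord → δ.cof = Cardinal.aleph0 →
        cand D δ ⊆ bad (cand D) → δ ∉ bad (cand D)) : False := by
  set L := l.ord with hLdef
  have haleph0 : Cardinal.aleph0 < l := lt_trans Cardinal.aleph0_lt_aleph_one hl
  have hLlim : Order.IsSuccLimit L := Cardinal.isSuccLimit_ord haleph0.le
  have hcofL : L.cof = l := hreg.cof_eq
  have hcofω : Cardinal.aleph0 < L.cof := by rw [hcofL]; exact haleph0
  -- each Dof i with small index is a club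
  have hclub : ∀ i : Ordinal.{u}, i.card ≤ Cardinal.aleph 1 → IsClubIn (Dof L bad i) L := by
    intro i
    induction i using Ordinal.induction with
    | h i IH =>
      intro hi
      rw [Dof_eq]
      exact isClubIn_inter_Iio hLlim hcofω i
        (lt_of_le_of_lt hi (by rw [hcofL]; exact hl))
        (fun j => Dof L bad j ∩ bad (cand (Dof L bad j)))
        (fun j hj => isClubIn_inter2 hLlim hcofω
          (IH j hj (le_trans (Ordinal.card_le_card hj.le) hi)) (hbad _).1)
  set θ := (Cardinal.aleph 1).ord with hθdef
  have hθcard : θ.card = Cardinal.aleph 1 := Cardinal.card_ord _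
  have hθlim : Order.IsSuccLimit θ := Cardinal.isSuccLimit_ord Cardinal.aleph0_lt_aleph_one.le
  have hθpos : (0 : Ordinal.{u}) < θ := hθlim.pos
  have hθcof : θ.cof = Cardinal.aleph 1 := Cardinal.isRegular_aleph_one.cof_eq
  have hclub' : ∀ i ≤ θ, IsClubIn (Dof L bad i) L := fun i hi =>
    hclub i (by rw [← hθcard]; exact Ordinal.card_le_card hi)
  obtain ⟨δ, hδD, hδL, hδcof, hδacc⟩ := exists_pick hLlim hcofω (hclub' θ le_rfl)
  have hacc : ∀ i ≤ θ, ∀ β < δ, ∃ e ∈ Dof L bad i, β ≤ e ∧ e < δ := fun i hi β hβ =>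
    (hδacc β hβ).imp fun e ⟨he, h1, h2⟩ => ⟨Dof_mono L bad hi he, h1, h2⟩
  -- stabilization
  have hanti : ∀ n : ℕ, ∀ i j : Ordinal.{u}, i ≤ j →
      sSup (Dof L bad j ∩ Set.Iio (fseq δ n)) ≤ sSup (Dof L bad i ∩ Set.Iio (fseq δ n)) :=
    fun n i j hij => sSup_mono'
      (Set.inter_subset_inter_left _ (Dof_mono L bad hij)) (fseq δ n)
      Set.inter_subset_right
  have hstab : ∀ n : ℕ, ∃ i < θ, ∀ j k, i ≤ j → j ≤ k → k < θ →
      sSup (Dof L bad j ∩ Set.Iio (fseq δ n)) = sSup (Dof L bad k ∩ Set.Iio (fseq δ n)) ∧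
      ((Dof L bad j ∩ Set.Iio (fseq δ n)).Nonempty ↔
        (Dof L bad k ∩ Set.Iio (fseq δ n)).Nonempty) := by
    intro n
    obtain ⟨i1, hi1θ, h1⟩ := stab_fun hθpos
      (fun i => sSup (Dof L bad i ∩ Set.Iio (fseq δ n))) (hanti n)
    obtain ⟨i2, hi2θ, h2⟩ := stab_prop hθpos
      (fun i => (Dof L bad i ∩ Set.Iio (fseq δ n)).Nonempty)
      (fun i j hij hne => hne.mono
        (Set.inter_subset_inter_left _ (Dof_mono L bad hij)))
    refine ⟨max i1 i2, max_lt hi1θ hi2θ, fun j k hj hjk hkθ => ?_⟩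
    have hjθ : j < θ := lt_of_le_of_lt hjk hkθ
    have hj1 : i1 ≤ j := le_trans (le_max_left _ _) hj
    have hj2 : i2 ≤ j := le_trans (le_max_right _ _) hj
    constructor
    · rw [h1 j hj1 hjθ, h1 k (le_trans hj1 hjk) hkθ]
    · rw [h2 j hj2 hjθ, h2 k (le_trans hj2 hjk) hkθ]
  choose iN hiNθ hiN using hstab
  set istar := ⨆ n, iN n with histar
  have histarθ : istar < θ := by
    apply Ordinal.iSup_lt_ord_lift ?_ hiNθ
    rw [Cardinal.mk_nat, Cardinal.lift_aleph0, hθcof]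
    exact Cardinal.aleph0_lt_aleph_one
  have hsuccθ : istar + 1 < θ := by
    rw [Ordinal.add_one_eq_succ]; exact hθlim.succ_lt histarθ
  have histar_le : istar ≤ θ := histarθ.le
  have hsucc_le : istar + 1 ≤ θ := hsuccθ.le
  -- glue sets agree at istar and istar + 1
  have hglue_eq : glueSet (Dof L bad istar) δ = glueSet (Dof L bad (istar + 1)) δ := by
    have hkey : ∀ n : ℕ,
        sSup (Dof L bad istar ∩ Set.Iio (fseq δ n)) =
          sSup (Dof L bad (istar + 1) ∩ Set.Iio (fseq δ n)) ∧
        ((Dof L bad istar ∩ Set.Iio (fseq δ n)).Nonempty ↔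
          (Dof L bad (istar + 1) ∩ Set.Iio (fseq δ n)).Nonempty) := fun n =>
      hiN n istar (istar + 1) (Ordinal.le_iSup iN n) (le_of_lt (by
        rw [Ordinal.add_one_eq_succ]; exact Order.lt_succ istar)) hsuccθ
    unfold glueSet
    ext x
    simp only [Set.mem_image, Set.mem_setOf_eq]
    constructor
    · rintro ⟨α, ⟨⟨n, rfl⟩, hne⟩, rfl⟩
      exact ⟨fseq δ n, ⟨⟨n, rfl⟩, (hkey n).2.1 hne⟩, (hkey n).1.symm⟩
    · rintro ⟨α, ⟨⟨n, rfl⟩, hne⟩, rfl⟩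
      exact ⟨fseq δ n, ⟨⟨n, rfl⟩, (hkey n).2.2 hne⟩, (hkey n).1⟩
  have hgood : ∀ i ≤ θ, Good (glueSet (Dof L bad i) δ) δ ∧
      glueSet (Dof L bad i) δ ⊆ Dof L bad i := fun i hi =>
    glueSet_spec (hclub' i hi) hδL hδcof (hacc i hi)
  have h1 : goodSet (Dof L bad istar) δ = glueSet (Dof L bad istar) δ :=
    if_pos (hgood istar histar_le).1
  have h2 : goodSet (Dof L bad (istar + 1)) δ = glueSet (Dof L bad (istar + 1)) δ :=
    if_pos (hgood (istar + 1) hsucc_le).1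
  have hgoodeq : goodSet (Dof L bad istar) δ = goodSet (Dof L bad (istar + 1)) δ := by
    rw [h1, hglue_eq, ← h2]
  have hcand_eq : cand (Dof L bad istar) δ = cand (Dof L bad (istar + 1)) δ := by
    unfold cand
    rw [hgoodeq]
  have hsucc_sub : Dof L bad (istar + 1) ⊆ bad (cand (Dof L bad istar)) := by
    intro β hβ
    rw [Dof_eq] at hβ
    exact (hβ.2 istar (by rw [Ordinal.add_one_eq_succ]; exact Order.lt_succ istar)).2
  have hsub : cand (Dof L bad istar) δ ⊆ bad (cand (Dof L bad istar)) := by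
    rw [hcand_eq]
    refine subset_trans (cand_subset hδcof) (subset_trans ?_ hsucc_sub)
    rw [h2]
    exact (hgood (istar + 1) hsucc_le).2
  have hδmem : δ ∈ bad (cand (Dof L bad istar)) :=
    hsucc_sub (Dof_mono L bad hsucc_le hδD)
  exact (hbad (Dof L bad istar)).2 δ hδL hδcof hsub hδmem

end Stmt12Aux

theorem stmt12 (l : Cardinal.{u}) (hreg : l.IsRegular) (hl : Cardinal.aleph 1 < l) :
    ∃ S : Set Ordinal.{u}, S ⊆ Set.Iio l.ord ∧ IsStationaryIn S l.ord ∧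
      ∃ c : Ordinal.{u} → Set Ordinal.{u},
        (∀ δ ∈ S, IsClubIn (c δ) δ ∧
          Ordinal.type (Subrel ((· < ·) : Ordinal.{u} → Ordinal.{u} → Prop) (· ∈ c δ)) =
            Ordinal.omega0) ∧
        ∀ E, IsClubIn E l.ord → IsStationaryIn {δ ∈ S | c δ ⊆ E} l.ord := by
  classical
  have haleph0 : Cardinal.aleph0 < l := lt_trans Cardinal.aleph0_lt_aleph_one hl
  have hLlim : Order.IsSuccLimit l.ord := Cardinal.isSuccLimit_ord haleph0.le
  have hcofω : Cardinal.aleph0 < l.ord.cof := by rw [hreg.cof_eq]; exact haleph0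
  set S : Set Ordinal.{u} := {x | x < l.ord ∧ x.cof = Cardinal.aleph0} with hSdef
  have hSsub : S ⊆ Set.Iio l.ord := fun x hx => hx.1
  have hSstat : IsStationaryIn S l.ord := by
    intro E hE
    obtain ⟨δ, hδE, hδL, hδcof, -⟩ := Stmt12Aux.exists_pick hLlim hcofω hE
    exact ⟨δ, ⟨hδL, hδcof⟩, hδE⟩
  refine ⟨S, hSsub, hSstat, ?_⟩
  by_contra hc
  push_neg at hc
  set bad : (Ordinal.{u} → Set Ordinal.{u}) → Set Ordinal.{u} := fun c =>
    if h : ∃ B, IsClubIn B l.ord ∧ ∀ δ, δ ∈ S → c δ ⊆ B → δ ∉ B then h.choose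
    else ∅ with hbaddef
  apply Stmt12Aux.main l hreg hl bad
  intro D
  have hvalid : ∀ δ ∈ S, IsClubIn (Stmt12Aux.cand D δ) δ ∧
      Ordinal.type (Subrel ((· < ·) : Ordinal.{u} → Ordinal.{u} → Prop)
        (· ∈ Stmt12Aux.cand D δ)) = Ordinal.omega0 :=
    fun δ hδ => Stmt12Aux.cand_spec hδ.2
  obtain ⟨E, hEclub, hEnot⟩ := hc (Stmt12Aux.cand D) hvalid
  rw [IsStationaryIn] at hEnot
  push_neg at hEnot
  obtain ⟨F, hFclub, hF⟩ := hEnot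
  have hEF : IsClubIn (E ∩ F) l.ord := Stmt12Aux.isClubIn_inter2 hLlim hcofω hEclub hFclub
  have hex : ∃ B, IsClubIn B l.ord ∧ ∀ δ, δ ∈ S → Stmt12Aux.cand D δ ⊆ B → δ ∉ B := by
    refine ⟨E ∩ F, hEF, fun δ hδS hsub hmem => ?_⟩
    have hmem2 : δ ∈ ({δ | δ ∈ S ∧ Stmt12Aux.cand D δ ⊆ E} ∩ F) :=
      ⟨⟨hδS, hsub.trans Set.inter_subset_left⟩, hmem.2⟩
    rw [hF] at hmem2
    exact hmem2
  have hbadeq : bad (Stmt12Aux.cand D) = hex.choose := by rw [hbaddef]; exact dif_pos hex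
  constructor
  · rw [hbadeq]; exact hex.choose_spec.1
  · intro δ h1 h2 h3
    rw [hbadeq] at h3 ⊢
    exact hex.choose_spec.2 δ ⟨h1, h2⟩ h3
end

section
/- For every natural number n, cov(ℵ_ω, ℵ_{n+1}, ℵ_{n+1}, ℵ_n) = ℵ_ω; that is, the minimal cardinality of a family A of subsets of ℵ_ω, each of size at most ℵ_n, such that every subset of ℵ_ω of size at most ℵ_n is covered by the union of fewer than ℵ_n members of A, equals ℵ_ω. -/
universe u

open Cardinal

/-- `cov l μ θ σ`: the least cardinality of a family `𝒜` of subsets of `l` each of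
cardinality `< μ`, such that every subset of `l` of cardinality `< θ` is covered by the
union of fewer than `σ` members of `𝒜`. -/
noncomputable def cov (l μ θ σ : Cardinal.{u}) : Cardinal.{u} :=
  sInf { x : Cardinal.{u} | ∃ 𝒜 : Set (Set l.ord.ToType), x = Cardinal.mk 𝒜 ∧
    (∀ a ∈ 𝒜, Cardinal.mk a < μ) ∧
    ∀ X : Set l.ord.ToType, Cardinal.mk X < θ →
      ∃ ℬ ⊆ 𝒜, Cardinal.mk ℬ < σ ∧ X ⊆ ⋃₀ ℬ }

open Set Order

lemma key (n : ℕ) : ∀ (m : ℕ) {β : Type u} (Y : Set β), #Y ≤ aleph (n + m) →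
    ∃ F : Set (Set β), #F ≤ aleph (n + m) ∧ (∀ a ∈ F, #a ≤ aleph n) ∧
      ∀ X ⊆ Y, #X ≤ aleph n → ∃ A ∈ F, X ⊆ A := by
  intro m
  induction m with
  | zero =>
    intro β Y hY
    refine ⟨{Y}, ?_, ?_, ?_⟩
    · simpa using (one_le_aleph0.trans (aleph0_le_aleph _))
    · intro a ha; rw [Set.mem_singleton_iff] at ha; subst ha
      simpa using hY
    · intro X hX _; exact ⟨Y, rfl, hX⟩
  | succ m ih =>
    intro β Y hY
    set κ := aleph (n + (m + 1)) with hκ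
    have hsucc : ((n : Ordinal) + (m + 1)) = Order.succ ((n : Ordinal) + m) := by
      rw [← add_assoc, Ordinal.add_one_eq_succ]
    have hκs : κ = Order.succ (aleph (n + m)) := by
      rw [hκ]; rw [hsucc, aleph_succ]
    -- embedding of Y into κ.ord.ToType
    have hle : #Y ≤ #κ.ord.ToType := by rwa [mk_ord_toType]
    obtain ⟨f⟩ := (Cardinal.le_def _ _).mp hle
    -- initial pieces
    let Yα : κ.ord.ToType → Set β := fun α => {y : β | ∃ h : y ∈ Y, f ⟨y, h⟩ < α}
    have hcard : ∀ α, #(Yα α) ≤ aleph (n + m) := by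
      intro α
      have h1 : #(Yα α) ≤ #(Iio α) := by
        refine Cardinal.mk_le_of_injective (f := fun y =>
          (⟨f ⟨y.1, y.2.choose⟩, y.2.choose_spec⟩ : Iio α)) ?_
        intro a b hab
        simp only [Subtype.mk.injEq] at hab
        have h := f.injective (congrArg Subtype.val hab)
        rw [Subtype.mk_eq_mk] at h
        exact Subtype.ext h
      have h2 : #(Iio α) < κ := Cardinal.mk_Iio_ord_toType α
      exact h1.trans (Order.lt_succ_iff.mp (lt_of_lt_of_eq h2 hκs))
    choose F hF1 hF2 hF3 using fun α => ih (Yα α) (hcard α)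
    refine ⟨⋃ α, F α, ?_, ?_, ?_⟩
    · calc #(⋃ α, F α) ≤ #κ.ord.ToType * ⨆ α, #(F α) := Cardinal.mk_iUnion_le _
        _ ≤ κ * κ := by
            apply mul_le_mul' (le_of_eq (mk_ord_toType _))
            refine ciSup_le' fun α => (hF1 α).trans ?_
            rw [hκs]; exact (Order.le_succ _)
        _ = κ := Cardinal.mul_eq_self (aleph0_le_aleph _)
    · intro a ha
      obtain ⟨α, hα⟩ := Set.mem_iUnion.mp ha
      exact hF2 α a hα
    · intro X hXY hX
      -- image of X in toType is bounded
      set S : Set κ.ord.ToType := range (fun x : X => f ⟨x.1, hXY x.2⟩) with hS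
      have hSlt : #S < κ.ord.cof := by
        have h1 : #S ≤ #X := Cardinal.mk_range_le
        have hreg : κ.ord.cof = κ := by
          have : Cardinal.IsRegular κ := by
            rw [hκ]; rw [hsucc]; exact isRegular_aleph_succ _
          exact this.cof_eq
        rw [hreg]
        refine lt_of_le_of_lt (h1.trans hX) ?_
        rw [hκ, aleph_lt_aleph]
        conv_lhs => rw [← add_zero (n : Ordinal)]
        rw [_root_.add_lt_add_iff_left]
        exact lt_of_lt_of_le zero_lt_one (le_add_self (a := (1 : Ordinal)) (b := (m : Ordinal)))
      have hbd : Set.Bounded (· < ·) S := by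
        by_contra hnb
        rw [Set.not_bounded_iff] at hnb
        have hc : IsCofinal S := fun a => by
          obtain ⟨b, hb, hab⟩ := hnb a; exact ⟨b, hb, not_lt.mp hab⟩
        exact absurd (Order.cof_le hc) (not_le.mpr (by rwa [Ordinal.cof_toType]))
      obtain ⟨α, hα⟩ := hbd
      have hXY' : X ⊆ Yα α := fun x hx =>
        ⟨hXY hx, hα _ (Set.mem_range_self (⟨x, hx⟩ : X))⟩
      obtain ⟨A, hA, hXA⟩ := hF3 α X hXY' hX
      exact ⟨A, Set.mem_iUnion.mpr ⟨α, hA⟩, hXA⟩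

lemma aleph_omega0_eq_sum :
    (Cardinal.sum fun i : ULift.{u} ℕ => aleph i.down) = aleph (Ordinal.omega0 : Ordinal.{u}) := by
  apply le_antisymm
  · calc Cardinal.sum (fun i : ULift.{u} ℕ => aleph i.down)
        ≤ #(ULift.{u} ℕ) * ⨆ i : ULift.{u} ℕ, aleph i.down := Cardinal.sum_le_mk_mul_iSup _
      _ ≤ ℵ₀ * aleph Ordinal.omega0 := by
          apply mul_le_mul'
          · simp
          · exact ciSup_le' fun i => aleph_le_aleph.mpr (Ordinal.nat_lt_omega0 i.down).le
      _ = aleph Ordinal.omega0 := by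
          rw [Cardinal.mul_eq_max le_rfl (aleph0_le_aleph _)]
          exact max_eq_right (aleph0_le_aleph _)
  · rw [aleph_limit Ordinal.isSuccLimit_omega0]
    refine ciSup_le' fun a => ?_
    obtain ⟨k, hk⟩ := Ordinal.lt_omega0.mp a.2
    rw [hk]
    exact Cardinal.le_sum (fun i : ULift.{u} ℕ => aleph i.down) (ULift.up k)

theorem main_aux (n : ℕ) (hn : 1 ≤ n) :
    cov.{u} (Cardinal.aleph Ordinal.omega0) (Cardinal.aleph (n + 1)) (Cardinal.aleph (n + 1))
      (Cardinal.aleph n) = Cardinal.aleph Ordinal.omega0 := by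
  unfold cov
  set L : Cardinal.{u} := aleph Ordinal.omega0 with hL
  set γ := L.ord.ToType with hγ
  have hmkγ : #γ = L := mk_ord_toType L
  have hsucc : aleph ((n : Ordinal) + 1) = Order.succ (aleph n) := by
    rw [Ordinal.add_one_eq_succ, aleph_succ]
  -- every admissible family has cardinality ≥ L
  have lower : ∀ x ∈ { x : Cardinal.{u} | ∃ 𝒜 : Set (Set γ), x = #𝒜 ∧
      (∀ a ∈ 𝒜, #a < aleph ((n : Ordinal) + 1)) ∧
      ∀ X : Set γ, #X < aleph ((n : Ordinal) + 1) →
        ∃ ℬ ⊆ 𝒜, #ℬ < aleph (n : Ordinal) ∧ X ⊆ ⋃₀ ℬ }, L ≤ x := by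
    rintro x ⟨𝒜, rfl, h1, h2⟩
    by_contra hlt
    push_neg at hlt
    have huniv : (Set.univ : Set γ) ⊆ ⋃₀ 𝒜 := by
      intro y _
      obtain ⟨ℬ, hℬ𝒜, -, hcov⟩ := h2 {y} (by
        rw [Cardinal.mk_singleton]
        exact lt_of_lt_of_le one_lt_aleph0 (aleph0_le_aleph _))
      exact Set.sUnion_subset_sUnion hℬ𝒜 (hcov rfl)
    have hLle : L ≤ #𝒜 * ⨆ s : 𝒜, #s := by
      calc L = #γ := hmkγ.symm
        _ = #(Set.univ : Set γ) := Cardinal.mk_univ.symm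
        _ ≤ #(⋃₀ 𝒜) := Cardinal.mk_le_mk_of_subset huniv
        _ ≤ #𝒜 * ⨆ s : 𝒜, #s := Cardinal.mk_sUnion_le 𝒜
    have hsup : (⨆ s : 𝒜, #s) < L := by
      rcases isEmpty_or_nonempty 𝒜 with h | h
      · rw [ciSup_of_empty]
        exact lt_of_lt_of_le aleph0_pos (aleph0_le_aleph _)
      · refine lt_of_le_of_lt (ciSup_le' fun s => (h1 s s.2).le) ?_
        rw [hL, aleph_lt_aleph]
        exact_mod_cast Ordinal.nat_lt_omega0 (n + 1)
    exact absurd hLle (not_le.mpr (Cardinal.mul_lt_of_lt (aleph0_le_aleph _) hlt hsup))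
  -- construct a witness family of cardinality ≤ L
  have he : #γ = #(Σ i : ULift.{u} ℕ, (aleph (i.down : Ordinal)).ord.ToType) := by
    rw [hmkγ, Cardinal.mk_sigma]
    simp_rw [mk_ord_toType]
    exact aleph_omega0_eq_sum.symm
  obtain ⟨e⟩ := Cardinal.eq.mp he
  set S : ULift.{u} ℕ → Set γ := fun i => {x | (e x).1 = i} with hSdef
  have hSm : ∀ i : ULift.{u} ℕ, #(S i) ≤ aleph ((n : Ordinal) + i.down) := by
    intro i
    have h1 : #(S i) = #(e '' S i) := (Cardinal.mk_image_eq e.injective).symm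
    have h2 : e '' S i ⊆ Set.range (Sigma.mk i) := by
      rw [Set.range_sigmaMk]
      rintro p ⟨x, hx, rfl⟩
      exact hx
    have h3 : #(Set.range (Sigma.mk i : _ → Σ j : ULift.{u} ℕ,
        (aleph (j.down : Ordinal)).ord.ToType)) = aleph (i.down : Ordinal) := by
      rw [Cardinal.mk_range_eq _ sigma_mk_injective, mk_ord_toType]
    calc #(S i) = #(e '' S i) := h1
      _ ≤ #(Set.range (Sigma.mk i)) := Cardinal.mk_le_mk_of_subset h2
      _ = aleph (i.down : Ordinal) := h3
      _ ≤ aleph ((n : Ordinal) + i.down) := aleph_le_aleph.mpr le_add_self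
  choose F hF1 hF2 hF3 using fun i : ULift.{u} ℕ => key n i.down (S i) (by
    exact_mod_cast hSm i)
  set 𝒜 : Set (Set γ) := ⋃ i : ULift.{u} ℕ, F i with h𝒜
  have h𝒜L : #𝒜 ≤ L := by
    calc #𝒜 ≤ #(ULift.{u} ℕ) * ⨆ i, #(F i) := Cardinal.mk_iUnion_le _
      _ ≤ ℵ₀ * L := by
          apply mul_le_mul'
          · simp
          · refine ciSup_le' fun i => (hF1 i).trans ?_
            rw [hL, aleph_le_aleph]
            exact_mod_cast (Ordinal.nat_lt_omega0 (n + i.down)).le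
      _ = L := by
          rw [Cardinal.mul_eq_max le_rfl (aleph0_le_aleph _)]
          exact max_eq_right (aleph0_le_aleph _)
  have hmem : #𝒜 ∈ { x : Cardinal.{u} | ∃ 𝒜 : Set (Set γ), x = #𝒜 ∧
      (∀ a ∈ 𝒜, #a < aleph ((n : Ordinal) + 1)) ∧
      ∀ X : Set γ, #X < aleph ((n : Ordinal) + 1) →
        ∃ ℬ ⊆ 𝒜, #ℬ < aleph (n : Ordinal) ∧ X ⊆ ⋃₀ ℬ } := by
    refine ⟨𝒜, rfl, ?_, ?_⟩
    · intro a ha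
      obtain ⟨i, hi⟩ := Set.mem_iUnion.mp ha
      refine lt_of_le_of_lt (hF2 i a hi) ?_
      rw [hsucc]
      exact Order.lt_succ _
    · intro X hX
      have hX' : #X ≤ aleph (n : Ordinal) := by
        rw [hsucc] at hX
        exact Order.lt_succ_iff.mp hX
      have hXi : ∀ i : ULift.{u} ℕ, ∃ A ∈ F i, X ∩ S i ⊆ A := by
        intro i
        refine hF3 i (X ∩ S i) Set.inter_subset_right ?_
        exact (Cardinal.mk_le_mk_of_subset Set.inter_subset_left).trans hX'
      choose A hA1 hA2 using hXi
      refine ⟨Set.range A, ?_, ?_, ?_⟩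
      · rintro a ⟨i, rfl⟩
        exact Set.mem_iUnion.mpr ⟨i, hA1 i⟩
      · refine lt_of_le_of_lt Cardinal.mk_range_le ?_
        have : #(ULift.{u} ℕ) = ℵ₀ := by simp
        rw [this, ← aleph_zero, aleph_lt_aleph]
        exact_mod_cast Nat.pos_of_ne_zero (by omega)
      · intro x hx
        exact Set.mem_sUnion.mpr ⟨A (e x).1, Set.mem_range_self _,
          hA2 (e x).1 ⟨hx, rfl⟩⟩
  -- conclude
  exact le_antisymm ((csInf_le' hmem).trans h𝒜L) (le_csInf ⟨_, hmem⟩ lower)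

theorem stmt14 (n : ℕ) (hn : 1 ≤ n) :
    cov (Cardinal.aleph Ordinal.omega0) (Cardinal.aleph (n + 1)) (Cardinal.aleph (n + 1))
      (Cardinal.aleph n) = Cardinal.aleph Ordinal.omega0 :=
  main_aux n hn
end
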